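/- For each k ∈ ℕ, the set L_k = { w ∈ Σ* : the normal form of w equals x̄ · shuffle(y, ȳ) · z with |y| = k } (i.e., words of overlap width exactly k) is not a regular language. Consequently, { q ∈ Q : ow(q) = k } is not recognizable. -/

import Mathlib

/-- A basic queue action: write a letter or read a letter. -/
inductive Act (A : Type) : Type
  | wr (a : A)
  | rd (a : A)
deriving DecidableEq

variable {A : Type} [DecidableEq A]

/-- The action of words over `Act A` on queue states `A* ∪ {⊥}` (⊥ = `none`). -/
def act : Option (List A) → List (Act A) → Option (List A)
  | q, [] => q
  | none, _ :: _ => none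
  | some q, (Act.wr a) :: u => act (some (q ++ [a])) u
  | some q, (Act.rd a) :: u =>
    match q with
    | [] => none
    | b :: q' => if b = a then act (some q') u else none

/-- Two words over `Act A` are equivalent if they act identically on all queues. -/
def qequiv (u v : List (Act A)) : Prop := ∀ q : List A, act (some q) u = act (some q) v

/-- Writing the word `w`. -/
def W (w : List A) : List (Act A) := w.map Act.wr

/-- Reading the word `w` (the barred copy of `w`). -/
def R (w : List A) : List (Act A) := w.map Act.rd

/-- `shuffle s` is the word `s₁ s̄₁ s₂ s̄₂ … sₖ s̄ₖ`. -/
def shuffle (s : List A) : List (Act A) := s.flatMap fun a => [Act.wr a, Act.rd a]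

/-- The projection to write letters. -/
def prW (w : List (Act A)) : List A :=
  w.filterMap fun x => match x with | Act.wr a => some a | Act.rd _ => none

/-- The projection to read letters (with the bars removed). -/
def prR (w : List (Act A)) : List A :=
  w.filterMap fun x => match x with | Act.wr _ => none | Act.rd a => some a

theorem act_append (u v : List (Act A)) : ∀ q, act q (u ++ v) = act (act q u) v := by
  induction u with
  | nil =>
      intro q
      cases q <;> rfl
  | cons x u ih =>
      intro q
      cases q with
      | none =>
          simp only [List.cons_append, act]
          cases v with
          | nil => rfl
          | cons _ _ => rfl
      | some q =>
          cases x with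
          | wr a => simpa [act] using ih _
          | rd a =>
              cases q with
              | nil =>
                  simp only [List.cons_append, act]
                  cases v with
                  | nil => rfl
                  | cons _ _ => rfl
              | cons b q' =>
                  by_cases h : b = a
                  · simp [List.cons_append, act, h, ih]
                  · simp only [List.cons_append, act, if_neg h]
                    cases v with
                    | nil => rfl
                    | cons _ _ => rfl

/-- The setoid of queue-action equivalence. -/
def qsetoid (A : Type) [DecidableEq A] : Setoid (List (Act A)) :=
  ⟨qequiv, ⟨fun _ _ => rfl, fun h q => (h q).symm, fun h1 h2 q => (h1 q).trans (h2 q)⟩⟩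

/-- The monoid of queue actions. -/
def QAct (A : Type) [DecidableEq A] : Type := Quotient (qsetoid A)

theorem act_none : ∀ v : List (Act A), act (none : Option (List A)) v = none
  | [] => rfl
  | _ :: _ => rfl

theorem qequiv_append {u u' v v' : List (Act A)} (hu : qequiv u u') (hv : qequiv v v') :
    qequiv (u ++ v) (u' ++ v') := by
  intro q
  rw [act_append, act_append, hu q]
  cases h : act (some q) u' with
  | none => rw [act_none, act_none]
  | some q' => exact hv q'

instance : Monoid (QAct A) where
  mul := Quotient.map₂ (· ++ ·) (fun _ _ hu _ _ hv => qequiv_append hu hv)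
  one := Quotient.mk (qsetoid A) []
  mul_assoc := by
    rintro ⟨u⟩ ⟨v⟩ ⟨w⟩
    exact congrArg (Quotient.mk (qsetoid A)) (List.append_assoc u v w)
  one_mul := by
    rintro ⟨u⟩
    rfl
  mul_one := by
    rintro ⟨u⟩
    exact congrArg (Quotient.mk (qsetoid A)) (List.append_nil u)

/-- The class of a word in the monoid of queue actions. -/
def cls (w : List (Act A)) : QAct A := Quotient.mk (qsetoid A) w

theorem cls_mul (u v : List (Act A)) : cls u * cls v = cls (u ++ v) := rfl

/-- A subset of the monoid of queue actions is recognizable if it is saturated by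
a morphism to a finite monoid. -/
def Recognizable (S : Set (QAct A)) : Prop :=
  ∃ (M : Type) (_ : Fintype M) (_ : Monoid M) (φ : QAct A →* M), φ ⁻¹' (φ '' S) = S

/-!
Fix letters `a ≠ b` and put `u_N = a^N b a^k`. For `N < M` (and `k ≤ M`) the word
`W(a^M b a^k) R(u_N)` is equivalent to `R(a^N b) · shuffle(a^k) · W(a^(M-k) b a^k)`, of overlap
width `k`, whereas for `k < N` the word `W(u_N) R(u_N)` is not equivalent to any word of width `k`.
Hence the prefixes `W(a^n)`, `n > k`, are pairwise separated by the suffixes `W(b a^k) R(u_N)`: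
no two of them have the same left quotient of the language, nor the same image under a morphism
into a monoid recognizing the set of width-`k` classes, and there are infinitely many of them.
-/

theorem act_W (v : List A) (q : List A) : act (some q) (W v) = some (q ++ v) := by
  induction v generalizing q with
  | nil => simp [W, act]
  | cons c v ih => simpa [W, act] using ih (q ++ [c])

theorem act_R (u : List A) (q : List A) :
    act (some q) (R u) = if u <+: q then some (q.drop u.length) else none := by
  induction u generalizing q with
  | nil => simp [R, act]
  | cons c u ih =>
    cases q with
    | nil => simp [R, act]
    | cons d q =>
      by_cases h : d = c
      · subst h
        simpa [R, act] using ih q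
      · simp [R, act, h, Ne.symm h]

theorem act_W_append_R (v u : List A) (q : List A) :
    act (some q) (W v ++ R u) =
      if u <+: q ++ v then some ((q ++ v).drop u.length) else none := by
  rw [act_append, act_W, act_R]

theorem qequiv_shuffle (y : List A) : qequiv (shuffle y) (W y ++ R y) := by
  induction y with
  | nil => intro q; rfl
  | cons c y ih =>
    intro q
    have hsplit : shuffle (c :: y) = (W [c] ++ R [c]) ++ shuffle y := rfl
    rw [hsplit, act_append, act_W_append_R, act_W_append_R]
    cases q with
    | nil => simpa [act_W_append_R] using ih []
    | cons d q =>
      by_cases h : d = c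
      · subst h
        simpa [act_W_append_R, List.cons_prefix_cons] using ih (q ++ [d])
      · simp [act_none, List.cons_prefix_cons, Ne.symm h]

theorem qequiv_W_append_R {x y z : List A}
    (hshort : ∀ q : List A, q.length < x.length → ¬ x ++ y <+: q ++ (y ++ z)) :
    qequiv (W (y ++ z) ++ R (x ++ y)) (R x ++ shuffle y ++ W z) := by
  intro q
  rw [act_W_append_R, act_append, act_append, act_R]
  by_cases hx : x <+: q
  · obtain ⟨r, rfl⟩ := hx
    have hy : y <+: r ++ (y ++ z) ↔ y <+: r ++ y := by
      rw [List.prefix_iff_eq_take, List.prefix_iff_eq_take, ← List.append_assoc,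
        List.take_append_of_le_length (by simp)]
    rw [if_pos (List.prefix_append x r), List.drop_left, qequiv_shuffle y r, act_W_append_R]
    simp only [List.append_assoc, List.prefix_append_right_inj, hy]
    split_ifs
    · rw [act_W, List.length_append, ← List.drop_drop, List.drop_left, ← List.append_assoc,
        List.drop_append_of_le_length (by simp)]
    · rw [act_none]
  · rw [if_neg hx, act_none, act_none, if_neg]
    intro hxy
    by_cases hlen : x.length ≤ q.length
    · exact hx (List.prefix_of_prefix_length_le ((List.prefix_append x y).trans hxy)
        (List.prefix_append q _) hlen)
    · exact hshort q (by omega) hxy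

def overlapLang (k : ℕ) : Language (Act A) :=
  {w | ∃ x y z : List A, y.length = k ∧ qequiv w (R x ++ shuffle y ++ W z)}

def overlapSet (k : ℕ) : Set (QAct A) :=
  {q | ∃ x y z : List A, y.length = k ∧ q = cls (R x ++ shuffle y ++ W z)}

theorem cls_mem_overlapSet_iff {k : ℕ} {w : List (Act A)} :
    cls w ∈ overlapSet k ↔ w ∈ overlapLang k :=
  ⟨fun ⟨x, y, z, hy, h⟩ => ⟨x, y, z, hy, Quotient.exact h⟩,
    fun ⟨x, y, z, hy, h⟩ => ⟨x, y, z, hy, Quotient.sound h⟩⟩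

section Fooling

open List

variable {a b : A} {k N M : ℕ}

theorem W_append_R_mem_overlapLang (hab : a ≠ b) (hkM : k ≤ M) (hNM : N < M) :
    W (replicate M a ++ b :: replicate k a) ++ R (replicate N a ++ b :: replicate k a) ∈
      overlapLang k := by
  have hyz : replicate k a ++ (replicate (M - k) a ++ b :: replicate k a) =
      replicate M a ++ b :: replicate k a := by
    rw [← append_assoc, ← replicate_add, Nat.add_sub_cancel' hkM]
  have hxy : (replicate N a ++ [b]) ++ replicate k a = replicate N a ++ b :: replicate k a := by
    simp
  refine ⟨replicate N a ++ [b], replicate k a, replicate (M - k) a ++ b :: replicate k a,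
    length_replicate, ?_⟩
  rw [← hyz, ← hxy]
  -- A queue shorter than `a^N b` would have to supply the `b` at position `N` from `a^M`.
  refine qequiv_W_append_R fun q hq hpre => hab ?_
  rw [hxy, hyz] at hpre
  have hqN : q.length ≤ N := by simpa [Nat.lt_succ_iff] using hq
  have hN := hpre.getElem (i := N) (by simp)
  simp only [getElem_append_right hqN] at hN
  rw [getElem_append_left (show N - q.length < (replicate M a).length by simp; omega)] at hN
  simpa using hN.symm

theorem W_append_R_self_not_mem_overlapLang (hab : a ≠ b) (hkN : k < N) :
    W (replicate N a ++ b :: replicate k a) ++ R (replicate N a ++ b :: replicate k a) ∉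
      overlapLang k := by
  set u := replicate N a ++ b :: replicate k a
  rintro ⟨x, y, z, hy, h⟩
  -- On the empty queue `W u ++ R u` acts trivially, which forces `x = z = []`; on the queue
  -- `u ++ [b]` it leaves `b :: u`, while `shuffle y` leaves a word starting with `u[k] = a`.
  have hempty := h []
  rw [act_W_append_R, act_append, act_append, act_R] at hempty
  obtain rfl : x = [] := by
    cases x
    · rfl
    · simp [act_none] at hempty
  obtain rfl : z = [] := by simpa [qequiv_shuffle y [], act_W_append_R, act_W] using hempty
  have hub := h (u ++ [b])
  rw [act_W_append_R, if_pos (by simp), act_append, act_append, act_R, if_pos nil_prefix,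
    qequiv_shuffle y, act_W_append_R] at hub
  split_ifs at hub
  · have hdrop : (u ++ b :: y).drop k = b :: u := by simpa [act_W, hy] using hub.symm
    have hk : (u ++ b :: y)[k]? = some a := by
      rw [getElem?_append_left (by simp [u]; omega), getElem?_append_left (by simpa using hkN),
        getElem?_replicate_of_lt hkN]
    rw [← Nat.add_zero k, ← getElem?_drop, hdrop] at hk
    exact hab (Option.some.inj hk).symm
  · simp [act_none] at hub

variable (a k) in
def foolingPrefix (n : ℕ) : List (Act A) := W (replicate (k + 1 + n) a)

variable (a b k) in
def foolingSuffix (m : ℕ) : List (Act A) :=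
  W (b :: replicate k a) ++ R (replicate (k + 1 + m) a ++ b :: replicate k a)

theorem foolingPrefix_append_foolingSuffix_mem (hab : a ≠ b) {m n : ℕ} (hmn : m < n) :
    foolingPrefix a k n ++ foolingSuffix a b k m ∈ overlapLang k := by
  convert W_append_R_mem_overlapLang hab (k := k) (N := k + 1 + m) (M := k + 1 + n)
    (by omega) (by omega) using 1
  simp [foolingPrefix, foolingSuffix, W]

theorem foolingPrefix_append_foolingSuffix_not_mem (hab : a ≠ b) (n : ℕ) :
    foolingPrefix a k n ++ foolingSuffix a b k n ∉ overlapLang k := by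
  convert W_append_R_self_not_mem_overlapLang hab (k := k) (N := k + 1 + n) (by omega) using 2
  simp [foolingPrefix, foolingSuffix, W]

end Fooling

theorem Function.injective_of_fooling {β : Type*} {f : ℕ → β} {P : ℕ → ℕ → Prop}
    (hf : ∀ m n, f m = f n → ∀ t, P m t ↔ P n t)
    (hlt : ∀ m n, m < n → P n m) (hdiag : ∀ n, ¬ P n n) : Function.Injective f := by
  intro m n hmn
  by_contra hne
  rcases lt_or_gt_of_ne hne with h | h
  · exact hdiag m ((hf m n hmn m).2 (hlt m n h))
  · exact hdiag n ((hf m n hmn n).1 (hlt n m h))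

theorem Language.not_isRegular_of_fooling {α : Type*} {L : Language α} (p s : ℕ → List α)
    (hlt : ∀ m n, m < n → p n ++ s m ∈ L) (hdiag : ∀ n, p n ++ s n ∉ L) : ¬ L.IsRegular := by
  intro hL
  have hinj : Function.Injective (L.leftQuotient ∘ p) :=
    Function.injective_of_fooling (P := fun n t => p n ++ s t ∈ L)
      (fun m n h t => by
        simp only [Function.comp_apply] at h
        rw [← L.mem_leftQuotient, h, L.mem_leftQuotient])
      hlt hdiag
  exact Set.infinite_range_of_injective hinj
    (hL.finite_range_leftQuotient.subset (Set.range_comp_subset_range _ _))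

theorem MonoidHom.preimage_image_ne_of_fooling {G M : Type*} [Monoid G] [Monoid M] [Finite M]
    (φ : G →* M) {S : Set G} (p s : ℕ → G)
    (hlt : ∀ m n, m < n → p n * s m ∈ S) (hdiag : ∀ n, p n * s n ∉ S) : φ ⁻¹' (φ '' S) ≠ S := by
  intro hS
  refine not_injective_infinite_finite (φ ∘ p) (Function.injective_of_fooling
    (P := fun n t => p n * s t ∈ S) (fun m n h t => ?_) hlt hdiag)
  simp only [Function.comp_apply] at h
  rw [← hS, Set.mem_preimage, Set.mem_preimage, map_mul, map_mul, h]

theorem not_isRegular_overlapLang [Nontrivial A] (k : ℕ) :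
    ¬ (overlapLang k : Language (Act A)).IsRegular := by
  obtain ⟨a, b, hab⟩ := exists_pair_ne A
  exact Language.not_isRegular_of_fooling (foolingPrefix a k) (foolingSuffix a b k)
    (fun _ _ => foolingPrefix_append_foolingSuffix_mem hab)
    (foolingPrefix_append_foolingSuffix_not_mem hab)

theorem not_recognizable_overlapSet [Nontrivial A] (k : ℕ) :
    ¬ Recognizable (overlapSet (A := A) k) := by
  obtain ⟨a, b, hab⟩ := exists_pair_ne A
  rintro ⟨M, _, _, φ, hφ⟩
  refine φ.preimage_image_ne_of_fooling (cls ∘ foolingPrefix a k) (cls ∘ foolingSuffix a b k)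
    (fun m n hmn => ?_) (fun n => ?_) hφ
  · rw [Function.comp_apply, Function.comp_apply, cls_mul, cls_mem_overlapSet_iff]
    exact foolingPrefix_append_foolingSuffix_mem hab hmn
  · rw [Function.comp_apply, Function.comp_apply, cls_mul, cls_mem_overlapSet_iff]
    exact foolingPrefix_append_foolingSuffix_not_mem hab n

theorem stmt18_general [Nontrivial A] (k : ℕ) :
    (¬ ∃ (σ : Type) (_ : Fintype σ) (M : DFA (Act A) σ),
        ∀ w : List (Act A), w ∈ M.accepts ↔
          ∃ x y z : List A, y.length = k ∧ qequiv w (R x ++ shuffle y ++ W z)) ∧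
    ¬ Recognizable
        { q : QAct A | ∃ x y z : List A, y.length = k ∧ q = cls (R x ++ shuffle y ++ W z) } :=
  ⟨fun ⟨σ, hσ, M, hM⟩ => not_isRegular_overlapLang k ⟨σ, hσ, M, Set.ext hM⟩,
    not_recognizable_overlapSet k⟩

/-- For each `k`, the language of words of overlap width exactly `k` is not regular, and
the set of queue actions of overlap width exactly `k` is not recognizable. -/
theorem stmt18 [Fintype A] [Nontrivial A] (k : ℕ) :
    (¬ ∃ (σ : Type) (_ : Fintype σ) (M : DFA (Act A) σ),
        ∀ w : List (Act A), w ∈ M.accepts ↔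
          ∃ x y z : List A, y.length = k ∧ qequiv w (R x ++ shuffle y ++ W z)) ∧
    ¬ Recognizable
        { q : QAct A | ∃ x y z : List A, y.length = k ∧ q = cls (R x ++ shuffle y ++ W z) } :=
  stmt18_general k
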